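/- Support of the post-C-NOT state of a chain of N + 1 EPR pairs (QQTR/QUR global correctness): fix N ≥ 1 and index 2N + 2 qubits by Fin (2N + 2), the i-th EPR pair occupying positions 2i and 2i + 1 for 0 ≤ i ≤ N. Let Ψ₀ : (Fin (2N + 2) → ZMod 2) → ℂ be the amplitude function of the product of N + 1 Bell states, i.e. Ψ₀ f = (√2)^(-(N+1)) if f (2i) = f (2i + 1) for all 0 ≤ i ≤ N, and Ψ₀ f = 0 otherwise. For positions j, k let the C-NOT on (control j, target k) act on amplitude functions by precomposition with the involution σ_{j,k} sending f to the function equal to f except that its value at k is f k + f j. Let Ψ be obtained from Ψ₀ by applying, for each i = 1, …, N, the C-NOT on control position 2i − 1 and target position 2i (these operations commute). Then for every f : Fin (2N + 2) → ZMod 2 with Ψ f ≠ 0, one has f 0 + f (2N + 1) = ∑_{i = 1}^{N} f (2i); i.e. in every computational basis state in the support of the post-circuit state, the XOR of the two endpoint qubits equals the XOR of the N relay target qubits. -/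

import Mathlib

/-!
Support of the post-C-NOT state of a chain of `N + 1` EPR pairs (QQTR/QUR
global correctness).  Qubit values are elements of `ZMod 2` (addition is XOR),
a computational basis state of `n` qubits is a function `Fin n → ZMod 2`, and
an `n`-qubit state is an amplitude function `(Fin n → ZMod 2) → ℂ`.
-/

noncomputable section

/-- The C-NOT gate with control `j` and target `k`, acting on amplitude
functions by precomposition with the involution sending `f` to the function
equal to `f` except that its value at `k` is `f k + f j`. -/
def cnotAct {n : ℕ} (j k : Fin n) (ψ : (Fin n → ZMod 2) → ℂ) :
    (Fin n → ZMod 2) → ℂ :=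
  fun f => ψ (Function.update f k (f k + f j))

/-- The amplitude function of the product of `N + 1` Bell states on `2N + 2`
qubits, the `i`-th EPR pair occupying positions `2i` and `2i + 1` for
`0 ≤ i ≤ N`: the amplitude is `(√2)^(-(N+1))` on each basis state in which the
values of every pair agree, and `0` elsewhere. -/
def bellChainInit (N : ℕ) : (Fin (2 * N + 2) → ZMod 2) → ℂ :=
  fun f =>
    if ∀ i : Fin (N + 1),
        f ⟨2 * i.val, by have := i.2; omega⟩ = f ⟨2 * i.val + 1, by have := i.2; omega⟩
    then ((Real.sqrt 2 : ℂ)) ^ (-(N + 1 : ℤ))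
    else 0

/-- The state obtained from `bellChainInit N` by applying, for each
`i = 1, …, N`, the C-NOT with control position `2i - 1` and target position
`2i` (these operations commute). -/
def bellChainPost (N : ℕ) : (Fin (2 * N + 2) → ZMod 2) → ℂ :=
  (List.finRange N).foldl
    (fun ψ i =>
      cnotAct ⟨2 * i.val + 1, by have := i.2; omega⟩
        ⟨2 * i.val + 2, by have := i.2; omega⟩ ψ)
    (bellChainInit N)


/-!
The `N` C-NOTs have pairwise distinct even targets and odd controls, so on a basis state `f`
their product just replaces each `f (2i + 2)` by `f (2i + 2) + f (2i + 1)`. Lying in the support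
of the Bell product then says `f 0 = f 1` and `f (2i + 3) = f (2i + 2) + f (2i + 1)`, so the sum
of the relay qubits telescopes to `f (2N + 1) - f 1 = f 0 + f (2N + 1)`.
-/

open Function

section CNOT

variable {n : ℕ}

def cnotBasisMap (j k : Fin n) (f : Fin n → ZMod 2) : Fin n → ZMod 2 :=
  update f k (f k + f j)

variable {ι : Type*} (c t : ι → Fin n)

theorem foldl_cnotAct_apply (L : List ι) (ψ : (Fin n → ZMod 2) → ℂ) (f : Fin n → ZMod 2) :
    L.foldl (fun ψ i => cnotAct (c i) (t i) ψ) ψ f =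
      ψ (L.foldr (fun i => cnotBasisMap (c i) (t i)) f) := by
  induction L generalizing ψ with
  | nil => rfl
  | cons a L ih => exact ih _

theorem foldr_cnotBasisMap_apply_of_forall_ne {L : List ι} (f : Fin n → ZMod 2) {p : Fin n}
    (hp : ∀ i ∈ L, t i ≠ p) : L.foldr (fun i => cnotBasisMap (c i) (t i)) f p = f p := by
  induction L with
  | nil => rfl
  | cons a L ih =>
    rw [List.forall_mem_cons] at hp
    rw [List.foldr_cons, cnotBasisMap, update_of_ne hp.1.symm, ih hp.2]

theorem foldr_cnotBasisMap_apply_target (ht : Injective t) (hct : ∀ i j, c i ≠ t j)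
    {L : List ι} (hL : L.Nodup) (f : Fin n → ZMod 2) {i : ι} (hi : i ∈ L) :
    L.foldr (fun i => cnotBasisMap (c i) (t i)) f (t i) = f (t i) + f (c i) := by
  induction L with
  | nil => simp at hi
  | cons a L ih =>
    rw [List.nodup_cons] at hL
    rw [List.foldr_cons, cnotBasisMap]
    obtain rfl | hiL := List.mem_cons.mp hi
    · have target_untouched : ∀ j ∈ L, t j ≠ t i := fun j hj h => hL.1 (ht h ▸ hj)
      have control_untouched : ∀ j ∈ L, t j ≠ c i := fun j _ h => hct i j h.symm
      rw [update_self, foldr_cnotBasisMap_apply_of_forall_ne c t f target_untouched,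
        foldr_cnotBasisMap_apply_of_forall_ne c t f control_untouched]
    · rw [update_of_ne (ht.ne (by rintro rfl; exact hL.1 hiL)), ih hL.2 hiL]

end CNOT

theorem Fin.sum_univ_succ_sub_castSucc {M : Type*} [AddCommGroup M] {n : ℕ}
    (F : Fin (n + 1) → M) : ∑ i : Fin n, (F i.succ - F i.castSucc) = F (Fin.last n) - F 0 := by
  induction n with
  | zero => simp
  | succ n ih =>
    have ih' := ih (fun i => F i.castSucc)
    simp only [← Fin.succ_castSucc, Fin.castSucc_zero] at ih'
    rw [Fin.sum_univ_castSucc, ih', Fin.succ_last]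
    abel

namespace BellChain

variable {N : ℕ}

def relayControl (i : Fin N) : Fin (2 * N + 2) := ⟨2 * i + 1, by omega⟩

def relayTarget (i : Fin N) : Fin (2 * N + 2) := ⟨2 * i + 2, by omega⟩

theorem relayTarget_injective : Injective (relayTarget (N := N)) := by
  intro i j h
  simp only [relayTarget, Fin.mk.injEq] at h
  omega

theorem relayControl_ne_relayTarget (i j : Fin N) : relayControl i ≠ relayTarget j := by
  simp only [relayControl, relayTarget, ne_eq, Fin.mk.injEq]
  omega

def circuitBasisMap (f : Fin (2 * N + 2) → ZMod 2) : Fin (2 * N + 2) → ZMod 2 :=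
  (List.finRange N).foldr (fun i => cnotBasisMap (relayControl i) (relayTarget i)) f

theorem bellChainPost_apply (f : Fin (2 * N + 2) → ZMod 2) :
    bellChainPost N f = bellChainInit N (circuitBasisMap f) :=
  foldl_cnotAct_apply relayControl relayTarget _ _ f

theorem circuitBasisMap_apply_relayTarget (f : Fin (2 * N + 2) → ZMod 2) (i : Fin N) :
    circuitBasisMap f (relayTarget i) = f (relayTarget i) + f (relayControl i) :=
  foldr_cnotBasisMap_apply_target _ _ relayTarget_injective relayControl_ne_relayTarget
    (List.nodup_finRange N) f (List.mem_finRange i)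

theorem circuitBasisMap_apply_of_ne (f : Fin (2 * N + 2) → ZMod 2) {p : Fin (2 * N + 2)}
    (hp : ∀ i : Fin N, (p : ℕ) ≠ 2 * i + 2) : circuitBasisMap f p = f p :=
  foldr_cnotBasisMap_apply_of_forall_ne _ _ f fun i _ h => hp i (congrArg Fin.val h).symm

theorem pair_eq_of_bellChainInit_ne_zero {g : Fin (2 * N + 2) → ZMod 2}
    (h : bellChainInit N g ≠ 0) (i : Fin (N + 1)) :
    g ⟨2 * i, by omega⟩ = g ⟨2 * i + 1, by omega⟩ := by
  by_contra hne
  exact h (if_neg fun hpairs => hne (hpairs i))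

variable {f : Fin (2 * N + 2) → ZMod 2}

theorem first_pair_eq_of_bellChainPost_ne_zero (hf : bellChainPost N f ≠ 0) :
    f ⟨0, by simp⟩ = f ⟨1, by simp⟩ := by
  rw [bellChainPost_apply] at hf
  have h := pair_eq_of_bellChainInit_ne_zero hf 0
  rwa [circuitBasisMap_apply_of_ne f (fun i => by simp),
    circuitBasisMap_apply_of_ne f (fun i => by simp)] at h

theorem relay_eq_of_bellChainPost_ne_zero (hf : bellChainPost N f ≠ 0) (i : Fin N) :
    f ⟨2 * i + 3, by omega⟩ = f (relayTarget i) + f (relayControl i) := by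
  rw [bellChainPost_apply] at hf
  have h := pair_eq_of_bellChainInit_ne_zero hf i.succ
  have htarget : (⟨2 * i.succ, by omega⟩ : Fin (2 * N + 2)) = relayTarget i := by
    simp only [relayTarget, Fin.val_succ, Fin.mk.injEq]
    ring
  rw [htarget, circuitBasisMap_apply_relayTarget,
    circuitBasisMap_apply_of_ne f (fun j => by simp only [Fin.val_succ]; omega)] at h
  exact h.symm

end BellChain

/-- In every computational basis state in the support of the post-circuit
state, the XOR of the two endpoint qubits (positions `0` and `2N + 1`) equals
the XOR of the `N` relay target qubits (positions `2i`, `i = 1, …, N`). -/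
theorem bellChainPost_support_parity (N : ℕ)
    (f : Fin (2 * N + 2) → ZMod 2) (hf : bellChainPost N f ≠ 0) :
    f ⟨0, by omega⟩ + f ⟨2 * N + 1, by omega⟩ =
      ∑ i : Fin N, f ⟨2 * (i.val + 1), by have := i.2; omega⟩ := by
  let F : Fin (N + 1) → ZMod 2 := fun i => f ⟨2 * i + 1, by omega⟩
  calc f ⟨0, by omega⟩ + f ⟨2 * N + 1, by omega⟩ = F (Fin.last N) - F 0 := by
        rw [BellChain.first_pair_eq_of_bellChainPost_ne_zero hf, CharTwo.sub_eq_add, add_comm]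
        rfl
    _ = ∑ i : Fin N, (F i.succ - F i.castSucc) := (Fin.sum_univ_succ_sub_castSucc F).symm
    _ = ∑ i : Fin N, f ⟨2 * (i.val + 1), by omega⟩ := by
        refine Finset.sum_congr rfl fun i _ => ?_
        rw [sub_eq_iff_eq_add]
        exact BellChain.relay_eq_of_bellChainPost_ne_zero hf i
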